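/- For all reals u, s with 0 < u ≤ s and all φ ∈ (0,π), ∫_0^{2π} ∫_0^∞ 1{L(θ,t) ∩ conv{(0,0), s(cos φ, sin φ), (u, 0)} ≠ ∅} t^{r−1} dt dθ = (s^r c(2,r)/r) F_r(u/s, φ), where L(θ,t) := {x ∈ ℝ² : x_1 cos θ + x_2 sin θ = t}. -/

import Mathlib

open MeasureTheory Real Set Filter

noncomputable section

/-- `kappa m` is the volume `κ_m = π^{m/2}/Γ(m/2+1)` of the `m`-dimensional unit ball. -/
def kappa (m : ℕ) : ℝ := Real.pi ^ ((m : ℝ) / 2) / Real.Gamma ((m : ℝ) / 2 + 1)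

/-- `omegaC m` is the surface area `ω_m = 2π^{m/2}/Γ(m/2)` of the unit sphere `S^{m-1}`. -/
def omegaC (m : ℕ) : ℝ := 2 * Real.pi ^ ((m : ℝ) / 2) / Real.Gamma ((m : ℝ) / 2)

/-- `bn2 n = ω_{n-1} ω_n / (4π)`. -/
def bn2 (n : ℕ) : ℝ := omegaC (n - 1) * omegaC n / (4 * Real.pi)

/-- The `j`-th standard basis vector of `ℝ^m` (or `0` if `j ≥ m`). -/
def eVec (m j : ℕ) : EuclideanSpace ℝ (Fin m) :=
  if h : j < m then EuclideanSpace.single ⟨j, h⟩ (1 : ℝ) else 0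

/-- `cC m s = c(m,s) = ∫_{S^{m-1}} ⟨e,u⟩₊^s dH^{m-1}(u)` for the fixed unit vector `e = e₁`. -/
def cC (m : ℕ) (s : ℝ) : ℝ :=
  ∫ u in Metric.sphere (0 : EuclideanSpace ℝ (Fin m)) 1,
    max ((inner ℝ (eVec m 0) u : ℝ)) 0 ^ s ∂(μH[(m : ℝ) - 1])

/-- `c2 s = c(2,s) = ∫_{-π/2}^{π/2} (cos θ)^s dθ`. -/
def c2 (s : ℝ) : ℝ := ∫ θ in (-(Real.pi / 2))..(Real.pi / 2), Real.cos θ ^ s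

/-- The hyperplane `H(u,t) = {x ∈ ℝⁿ : ⟨x,u⟩ = t}`. -/
def hyp (n : ℕ) (u : EuclideanSpace ℝ (Fin n)) (t : ℝ) : Set (EuclideanSpace ℝ (Fin n)) :=
  {x | (inner ℝ x u : ℝ) = t}

/-- `innerInt n r K = ∫_{S^{n-1}} ∫_0^∞ 1{H(u,t) ∩ K ≠ ∅} t^{r-1} dt dH^{n-1}(u)`. -/
def innerInt (n : ℕ) (r : ℝ) (K : Set (EuclideanSpace ℝ (Fin n))) : ℝ :=
  ∫ u in Metric.sphere (0 : EuclideanSpace ℝ (Fin n)) 1,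
    (∫ t in Set.Ioi (0 : ℝ),
      Set.indicator {t : ℝ | (hyp n u t ∩ K).Nonempty} (fun t => t ^ (r - 1)) t)
    ∂(μH[(n : ℝ) - 1])

/-- `momentI n k r γ = I_k(n,r,γ)`, the `k`-th moment of the volume of the zero cell. -/
def momentI (n k : ℕ) (r γ : ℝ) : ℝ :=
  ∫ x : Fin k → EuclideanSpace ℝ (Fin n),
    Real.exp (-(2 * γ / ((n : ℝ) * kappa n)) *
      innerInt n r (convexHull ℝ (insert 0 (Set.range x))))

/-- `VarF n r γ = Var(n,r,γ) = I_2 - I_1²`, the variance of the volume of the zero cell. -/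
def VarF (n : ℕ) (r γ : ℝ) : ℝ := momentI n 2 r γ - (momentI n 1 r γ) ^ 2

/-- `alphaF t φ = α(t,φ) = arctan((t - cos φ)/ sin φ)`. -/
def alphaF (t φ : ℝ) : ℝ := Real.arctan ((t - Real.cos φ) / Real.sin φ)

/-- The auxiliary function `F_r(t,φ)`. -/
def Fr (r t φ : ℝ) : ℝ :=
  (1 / c2 r) * (t ^ r * (∫ θ in (-(Real.pi / 2))..(alphaF t φ), Real.cos θ ^ r)
    + ∫ θ in (alphaF t φ - φ)..(Real.pi / 2), Real.cos θ ^ r)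

/-- The planar line `L(θ,t) = {x ∈ ℝ² : x₁ cos θ + x₂ sin θ = t}`. -/
def lineL (θ t : ℝ) : Set (ℝ × ℝ) := {x | x.1 * Real.cos θ + x.2 * Real.sin θ = t}

/-- `planarInt r K = ∫_0^{2π} ∫_0^∞ 1{L(θ,t) ∩ K ≠ ∅} t^{r-1} dt dθ`. -/
def planarInt (r : ℝ) (K : Set (ℝ × ℝ)) : ℝ :=
  ∫ θ in (0 : ℝ)..(2 * Real.pi),
    ∫ t in Set.Ioi (0 : ℝ),
      Set.indicator {t : ℝ | (lineL θ t ∩ K).Nonempty} (fun t => t ^ (r - 1)) t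

/-- The auxiliary quantity `D(n,r,γ)`. -/
def Dconst (n : ℕ) (r γ : ℝ) : ℝ :=
  (n : ℝ) * kappa n ^ 2 / r * Real.Gamma (2 * (n : ℝ) / r + 1) *
    ((n : ℝ) * kappa n * r / (4 * γ * cC n r)) ^ (2 * (n : ℝ) / r)

/-- The auxiliary quantity `E(n,r)`. -/
def Econst (n : ℕ) (r : ℝ) : ℝ :=
  ((n : ℝ) / c2 ((n : ℝ) - 2)) *
    ∫ φ in (0 : ℝ)..Real.pi, (Real.sin φ) ^ (n - 2) *
      ∫ t in (0 : ℝ)..1, t ^ (n - 1) * (1 + t ^ r - Fr r t φ)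

/-- `Mfun v r = M(v,r) = (1/c(2,r)) ∫_v^{π/2} (cos θ)^r dθ`. -/
def Mfun (v r : ℝ) : ℝ := (1 / c2 r) * ∫ θ in v..(Real.pi / 2), Real.cos θ ^ r

/-- `Aconst r = A(r) = π^{(r+1)/2}/(e Γ((r+1)/2))`. -/
def Aconst (r : ℝ) : ℝ := Real.pi ^ ((r + 1) / 2) / (Real.exp 1 * Real.Gamma ((r + 1) / 2))

/-- `Bconst a = B(a) = 2πe(a+1)^{(a+1)/a}/a`. -/
def Bconst (a : ℝ) : ℝ := 2 * Real.pi * Real.exp 1 * (a + 1) ^ ((a + 1) / a) / a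

/-- The intensity `γ̂(a,n)` normalizing the expected volume of the zero cell to `1/λ`. -/
def gammaHat (a lam : ℝ) (n : ℕ) : ℝ :=
  a * (n : ℝ) ^ 2 * kappa n / (2 * cC n (a * n)) *
    (lam * Real.Gamma (1 / a + 1) * kappa n) ^ a

/-- The embedding of `ℝ²` onto `span{e₁,e₂} ⊆ ℝⁿ`. -/
def emb (n : ℕ) (q : ℝ × ℝ) : EuclideanSpace ℝ (Fin n) :=
  q.1 • eVec n 0 + q.2 • eVec n 1

/-- `para2 n x y = ∇₂(x,y)`, the area of the parallelogram spanned by `x` and `y`. -/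
def para2 (n : ℕ) (x y : EuclideanSpace ℝ (Fin n)) : ℝ :=
  Real.sqrt (‖x‖ ^ 2 * ‖y‖ ^ 2 - (inner ℝ x y : ℝ) ^ 2)

end


/-! The line `L(θ, t)` meets `K = conv {0, s e_φ, u e₁}` exactly when `t` lies between the least
and the largest value of `x ↦ x₁ cos θ + x₂ sin θ` on the vertices, so the inner integral is
`h(θ)^r / r` with `h(θ) = max (0, s cos (θ - φ), u cos θ)` the support function of `K`.
Over the period `[-π/2, 3π/2]` the maximum is `u cos θ` up to `α = α(u/s, φ)`, then
`s cos (θ - φ)` up to `φ + π/2`, and `0` afterwards; the switch happens at `α` because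
`cos (θ - φ) - t cos θ = (sin φ / cos α) sin (θ - α)`. -/

lemma convexHull_triple_eq_Icc (a b c : ℝ) :
    convexHull ℝ ({a, b, c} : Set ℝ) = Icc (min a (min b c)) (max a (max b c)) := by
  refine (convexHull_min ?_ (convex_Icc _ _)).antisymm ?_
  · rintro x (rfl | rfl | rfl) <;> simp
  · have hmin : min a (min b c) ∈ ({a, b, c} : Set ℝ) := by
      rcases min_choice a (min b c) with h | h <;> rw [h]
      · simp
      · rcases min_choice b c with h | h <;> rw [h] <;> simp
    have hmax : max a (max b c) ∈ ({a, b, c} : Set ℝ) := by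
      rcases max_choice a (max b c) with h | h <;> rw [h]
      · simp
      · rcases max_choice b c with h | h <;> rw [h] <;> simp
    rw [← segment_eq_Icc ((min_le_left _ _).trans (le_max_left _ _))]
    exact segment_subset_convexHull hmin hmax

lemma setIntegral_Ioi_indicator_Icc_rpow {r m M : ℝ} (hr : 0 < r) (hm : m ≤ 0) (hM : 0 ≤ M) :
    ∫ t in Ioi 0, (Icc m M).indicator (fun t => t ^ (r - 1)) t = M ^ r / r := by
  have hIoc : Ioi (0 : ℝ) ∩ Icc m M = Ioc 0 M := by
    ext t
    simp only [mem_inter_iff, mem_Ioi, mem_Icc, mem_Ioc]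
    exact ⟨fun h => ⟨h.1, h.2.2⟩, fun h => ⟨h.1, hm.trans h.1.le, h.2⟩⟩
  rw [setIntegral_indicator measurableSet_Icc, hIoc,
    ← intervalIntegral.integral_of_le hM, integral_rpow (Or.inl (by linarith)), sub_add_cancel,
    zero_rpow hr.ne', sub_zero]

lemma setOf_lineL_inter_nonempty (θ : ℝ) (K : Set (ℝ × ℝ)) :
    {t | (lineL θ t ∩ K).Nonempty} = (fun x : ℝ × ℝ => x.1 * cos θ + x.2 * sin θ) '' K := by
  ext t
  exact ⟨fun ⟨x, hxL, hxK⟩ => ⟨x, hxK, hxL⟩, fun ⟨x, hxK, hxL⟩ => ⟨x, hxL, hxK⟩⟩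

lemma setIntegral_indicator_lineL_inter_triangle {r : ℝ} (hr : 0 < r) (θ : ℝ) (p q : ℝ × ℝ) :
    ∫ t in Ioi 0,
        {t | (lineL θ t ∩ convexHull ℝ {(0, 0), p, q}).Nonempty}.indicator
          (fun t => t ^ (r - 1)) t =
      max 0 (max (p.1 * cos θ + p.2 * sin θ) (q.1 * cos θ + q.2 * sin θ)) ^ r / r := by
  set f : ℝ × ℝ → ℝ := fun x => x.1 * cos θ + x.2 * sin θ
  have hf : IsLinearMap ℝ f :=
    ⟨fun x y => by simp only [f, Prod.fst_add, Prod.snd_add]; ring,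
      fun c x => by simp only [f, Prod.smul_fst, Prod.smul_snd, smul_eq_mul]; ring⟩
  rw [setOf_lineL_inter_nonempty, hf.image_convexHull, image_insert_eq, image_insert_eq,
    image_singleton, show f (0, 0) = 0 by simp [f], convexHull_triple_eq_Icc]
  exact setIntegral_Ioi_indicator_Icc_rpow hr (min_le_left _ _) (le_max_left _ _)

section TriangleSupport

variable {t φ θ : ℝ}

lemma cos_sub_sub_mul_cos (hφ : sin φ ≠ 0) :
    cos (θ - φ) - t * cos θ = sin φ / cos (alphaF t φ) * sin (θ - alphaF t φ) := by
  have hcos : cos (alphaF t φ) ≠ 0 := (cos_arctan_pos _).ne'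
  have hsin : sin (alphaF t φ) = (t - cos φ) / sin φ * cos (alphaF t φ) := by
    rw [← tan_arctan ((t - cos φ) / sin φ), tan_eq_sin_div_cos, ← alphaF, div_mul_cancel₀ _ hcos]
  rw [cos_sub, sin_sub, hsin]
  field_simp
  ring

lemma sub_pi_div_two_le_alphaF (ht : 0 ≤ t) (hφ : φ ∈ Ioo 0 π) : φ - π / 2 ≤ alphaF t φ := by
  have hsin : 0 < sin φ := sin_pos_of_pos_of_lt_pi hφ.1 hφ.2
  have htan : tan (φ - π / 2) = (0 - cos φ) / sin φ := by
    rw [tan_eq_sin_div_cos, sin_sub_pi_div_two, cos_sub_pi_div_two, zero_sub, neg_div]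
  calc φ - π / 2 = arctan ((0 - cos φ) / sin φ) := by
        rw [← htan, arctan_tan (by linarith [hφ.1]) (by linarith [hφ.2])]
    _ ≤ alphaF t φ := arctan_strictMono.monotone (by gcongr)

lemma cos_sub_le_mul_cos (hφ : φ ∈ Ioo 0 π) (hθ : -(π / 2) ≤ θ) (hθα : θ ≤ alphaF t φ) :
    cos (θ - φ) ≤ t * cos θ := by
  have hsin : 0 < sin φ := sin_pos_of_pos_of_lt_pi hφ.1 hφ.2
  have hα : alphaF t φ < π / 2 := arctan_lt_pi_div_two _
  have hk : 0 ≤ sin φ / cos (alphaF t φ) := (div_pos hsin (cos_arctan_pos _)).le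
  have hneg : sin (θ - alphaF t φ) ≤ 0 :=
    sin_nonpos_of_nonpos_of_neg_pi_le (by linarith) (by linarith)
  linarith [cos_sub_sub_mul_cos (t := t) (θ := θ) hsin.ne', mul_nonpos_of_nonneg_of_nonpos hk hneg]

lemma mul_cos_le_cos_sub (ht : 0 ≤ t) (hφ : φ ∈ Ioo 0 π) (hαθ : alphaF t φ ≤ θ)
    (hθ : θ ≤ φ + π / 2) : t * cos θ ≤ cos (θ - φ) := by
  have hsin : 0 < sin φ := sin_pos_of_pos_of_lt_pi hφ.1 hφ.2
  have hα := sub_pi_div_two_le_alphaF ht hφ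
  have hk : 0 ≤ sin φ / cos (alphaF t φ) := (div_pos hsin (cos_arctan_pos _)).le
  have hpos : 0 ≤ sin (θ - alphaF t φ) := sin_nonneg_of_nonneg_of_le_pi (by linarith) (by linarith)
  linarith [cos_sub_sub_mul_cos (t := t) (θ := θ) hsin.ne', mul_nonneg hk hpos]

/-- The support function of `conv {0, (cos φ, sin φ), (t, 0)}` in the direction `θ`. -/
noncomputable def triangleSupport (t φ θ : ℝ) : ℝ := max 0 (max (cos (θ - φ)) (t * cos θ))

lemma triangleSupport_of_mem_Icc_neg_pi_div_two_alphaF (ht : 0 ≤ t) (hφ : φ ∈ Ioo 0 π)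
    (hθ : θ ∈ Icc (-(π / 2)) (alphaF t φ)) : triangleSupport t φ θ = t * cos θ := by
  have hcos : 0 ≤ cos θ :=
    cos_nonneg_of_mem_Icc ⟨hθ.1, hθ.2.trans (arctan_lt_pi_div_two _).le⟩
  rw [triangleSupport, max_eq_right (cos_sub_le_mul_cos hφ hθ.1 hθ.2),
    max_eq_right (mul_nonneg ht hcos)]

lemma triangleSupport_of_mem_Icc_alphaF_add_pi_div_two (ht : 0 ≤ t) (hφ : φ ∈ Ioo 0 π)
    (hθ : θ ∈ Icc (alphaF t φ) (φ + π / 2)) : triangleSupport t φ θ = cos (θ - φ) := by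
  have hα := sub_pi_div_two_le_alphaF ht hφ
  have hcos : 0 ≤ cos (θ - φ) := cos_nonneg_of_mem_Icc ⟨by linarith [hθ.1], by linarith [hθ.2]⟩
  rw [triangleSupport, max_eq_left (mul_cos_le_cos_sub ht hφ hθ.1 hθ.2), max_eq_right hcos]

lemma triangleSupport_of_mem_Icc_add_pi_div_two (ht : 0 ≤ t) (hφ : φ ∈ Ioo 0 π)
    (hθ : θ ∈ Icc (φ + π / 2) (3 * π / 2)) : triangleSupport t φ θ = 0 := by
  have hcos : cos θ ≤ 0 :=
    cos_nonpos_of_pi_div_two_le_of_le (by linarith [hθ.1, hφ.1]) (by linarith [hθ.2])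
  have hcos_sub : cos (θ - φ) ≤ 0 :=
    cos_nonpos_of_pi_div_two_le_of_le (by linarith [hθ.1]) (by linarith [hθ.2, hφ.1])
  exact max_eq_left (max_le hcos_sub (mul_nonpos_of_nonneg_of_nonpos ht hcos))

lemma integral_triangleSupport_rpow {r : ℝ} (hr : 0 < r) (ht : 0 ≤ t) (hφ : φ ∈ Ioo 0 π) :
    ∫ θ in 0..2 * π, triangleSupport t φ θ ^ r =
      t ^ r * (∫ θ in -(π / 2)..alphaF t φ, cos θ ^ r) +
        ∫ θ in alphaF t φ - φ..π / 2, cos θ ^ r := by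
  set α := alphaF t φ
  have hα₁ : -(π / 2) ≤ α := (neg_pi_div_two_lt_arctan _).le
  have hα₂ : α < π / 2 := arctan_lt_pi_div_two _
  have hα₃ : α ≤ φ + π / 2 := by linarith [hφ.1]
  have hcont : Continuous fun θ => triangleSupport t φ θ ^ r :=
    (by unfold triangleSupport; fun_prop : Continuous (triangleSupport t φ)).rpow_const
      fun _ => Or.inr hr.le
  have hint (a b : ℝ) := hcont.intervalIntegrable (μ := volume) a b
  have hper : Function.Periodic (fun θ => triangleSupport t φ θ ^ r) (2 * π) := fun θ => by
    simp only [triangleSupport, show θ + 2 * π - φ = θ - φ + 2 * π by ring, cos_add_two_pi]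
  have h₁ : ∫ θ in -(π / 2)..α, triangleSupport t φ θ ^ r =
      t ^ r * ∫ θ in -(π / 2)..α, cos θ ^ r := by
    rw [← intervalIntegral.integral_const_mul]
    refine intervalIntegral.integral_congr fun θ hθ => ?_
    rw [uIcc_of_le hα₁] at hθ
    rw [triangleSupport_of_mem_Icc_neg_pi_div_two_alphaF ht hφ hθ,
      mul_rpow ht (cos_nonneg_of_mem_Icc ⟨hθ.1, hθ.2.trans hα₂.le⟩)]
  have h₂ : ∫ θ in α..φ + π / 2, triangleSupport t φ θ ^ r = ∫ θ in α - φ..π / 2, cos θ ^ r := by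
    rw [intervalIntegral.integral_congr (g := fun θ => cos (θ - φ) ^ r) fun θ hθ => by
      rw [uIcc_of_le hα₃] at hθ
      rw [triangleSupport_of_mem_Icc_alphaF_add_pi_div_two ht hφ hθ],
      intervalIntegral.integral_comp_sub_right (fun θ => cos θ ^ r), add_sub_cancel_left]
  have h₃ : ∫ θ in φ + π / 2..3 * π / 2, triangleSupport t φ θ ^ r = 0 := by
    rw [intervalIntegral.integral_congr (g := fun _ => 0) fun θ hθ => by
      rw [uIcc_of_le (by linarith [hφ.2])] at hθ
      rw [triangleSupport_of_mem_Icc_add_pi_div_two ht hφ hθ, zero_rpow hr.ne'],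
      intervalIntegral.integral_zero]
  rw [← zero_add (2 * π), hper.intervalIntegral_add_eq 0 (-(π / 2)),
    show -(π / 2) + 2 * π = 3 * π / 2 by ring,
    ← intervalIntegral.integral_add_adjacent_intervals (hint _ α) (hint α _),
    ← intervalIntegral.integral_add_adjacent_intervals (hint α (φ + π / 2)) (hint _ _),
    h₁, h₂, h₃, add_zero]

end TriangleSupport

lemma c2_pos {r : ℝ} (hr : 0 ≤ r) : 0 < c2 r := by
  refine intervalIntegral.intervalIntegral_pos_of_pos_on
    ((continuous_cos.rpow_const fun _ => Or.inr hr).intervalIntegrable _ _)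
    (fun θ hθ => rpow_pos_of_pos (cos_pos_of_mem_Ioo hθ) r) ?_
  linarith [pi_pos]

lemma c2_mul_Fr {r : ℝ} (hr : 0 ≤ r) (t φ : ℝ) :
    c2 r * Fr r t φ =
      t ^ r * (∫ θ in -(π / 2)..alphaF t φ, cos θ ^ r) +
        ∫ θ in alphaF t φ - φ..π / 2, cos θ ^ r := by
  rw [Fr, ← mul_assoc, mul_one_div_cancel (c2_pos hr).ne', one_mul]

/-- the explicit evaluation of the planar integral via `F_r`. -/
theorem statement9 (r : ℝ) (hr : 0 < r) (u s : ℝ) (hu : 0 < u) (hus : u ≤ s)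
    (φ : ℝ) (hφ : φ ∈ Set.Ioo (0 : ℝ) Real.pi) :
    planarInt r (convexHull ℝ {(0, 0), (s * Real.cos φ, s * Real.sin φ), (u, 0)}) =
      s ^ r * c2 r / r * Fr r (u / s) φ := by
  have hs : 0 < s := hu.trans_le hus
  have hsupport (θ : ℝ) :
      max 0 (max (s * cos φ * cos θ + s * sin φ * sin θ)
        (u * cos θ + 0 * sin θ)) = s * triangleSupport (u / s) φ θ := by
    rw [triangleSupport, mul_max_of_nonneg _ _ hs.le, mul_max_of_nonneg _ _ hs.le, mul_zero,
      cos_sub, ← mul_assoc, mul_div_cancel₀ _ hs.ne']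
    congr 2 <;> ring
  have hnonneg (θ : ℝ) : 0 ≤ triangleSupport (u / s) φ θ := le_max_left _ _
  simp_rw [planarInt, setIntegral_indicator_lineL_inter_triangle hr, hsupport,
    mul_rpow hs.le (hnonneg _)]
  rw [intervalIntegral.integral_div, intervalIntegral.integral_const_mul,
    integral_triangleSupport_rpow hr (div_pos hu hs).le hφ, ← c2_mul_Fr hr.le]
  ring
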